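/- arXiv:1509.07155 — 5 statements merged into one kernel-verified Lean document; each statement's English description precedes it below -/
import Mathlib

section
/- Let N, J ≥ 1, A ∈ ℝ^{N×J}, b ∈ ℝ^J, Q ∈ ℝ^J with Q ≥ 0, and let u : ℝ → ℝ be strictly increasing. Denote by X = {x ∈ ℝ^J : 0 ≤ x ≤ Q} the feasible set of order fills. Then x* ∈ X maximizes the function x ↦ b·x − max_{1 ≤ i ≤ N} (Ax)_i over X if and only if x* maximizes the function x ↦ min_{p ∈ Δ_N} ∑_{i=1}^N p_i · u(b·x − (Ax)_i) over X. (Asymptotic equivalence of the CPCAM market-clearing problem with the optimization problem of a market maker with extreme ambiguity aversion.) -/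
open Finset

theorem sInf_simplex_weightedSum_eq_inf' {ι : Type*} [Fintype ι]
    (hι : (univ : Finset ι).Nonempty) (f : ι → ℝ) :
    sInf {y : ℝ | ∃ p : ι → ℝ, (∀ i, 0 ≤ p i) ∧ ∑ i, p i = 1 ∧ y = ∑ i, p i * f i} =
      univ.inf' hι f := by
  set S := {y : ℝ | ∃ p : ι → ℝ, (∀ i, 0 ≤ p i) ∧ ∑ i, p i = 1 ∧ y = ∑ i, p i * f i}
  obtain ⟨i₀, -, hi₀⟩ := exists_mem_eq_inf' hι f
  have hvertex : univ.inf' hι f ∈ S := by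
    classical
    exact ⟨Pi.single i₀ 1, fun i => by rw [Pi.single_apply]; positivity, by simp,
      by simp [hi₀, Pi.single_apply]⟩
  have hlower : ∀ y ∈ S, univ.inf' hι f ≤ y := by
    rintro y ⟨p, hp, hp_sum, rfl⟩
    calc univ.inf' hι f = ∑ i, p i * univ.inf' hι f := by rw [← sum_mul, hp_sum, one_mul]
      _ ≤ ∑ i, p i * f i :=
        sum_le_sum fun i _ => mul_le_mul_of_nonneg_left (inf'_le _ (mem_univ i)) (hp i)
  exact le_antisymm (csInf_le ⟨_, hlower⟩ hvertex) (le_csInf ⟨_, hvertex⟩ hlower)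

theorem Antitone.map_finset_sup' {ι α β : Type*} [LinearOrder α] [LinearOrder β]
    {φ : α → β} (hφ : Antitone φ) {s : Finset ι} (hs : s.Nonempty) (f : ι → α) :
    φ (s.sup' hs f) = s.inf' hs (φ ∘ f) := by
  obtain ⟨i₀, hi₀, hmax⟩ := exists_mem_eq_sup' hs f
  refine le_antisymm (le_inf' _ _ fun i hi => hφ (le_sup' f hi)) ?_
  rw [hmax]
  exact inf'_le _ hi₀

theorem stmt_2_general (N J : ℕ) (hN : 1 ≤ N)
    (A : Fin N → Fin J → ℝ) (b Q : Fin J → ℝ)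
    (u : ℝ → ℝ) (hu : StrictMono u)
    (xstar : Fin J → ℝ) :
    (∀ x : Fin J → ℝ, (∀ j, 0 ≤ x j ∧ x j ≤ Q j) →
        (∑ j, b j * x j) -
          Finset.univ.sup' (Finset.univ_nonempty_iff.mpr (Fin.pos_iff_nonempty.mp hN))
            (fun i => ∑ j, A i j * x j) ≤
        (∑ j, b j * xstar j) -
          Finset.univ.sup' (Finset.univ_nonempty_iff.mpr (Fin.pos_iff_nonempty.mp hN))
            (fun i => ∑ j, A i j * xstar j))
    ↔
    (∀ x : Fin J → ℝ, (∀ j, 0 ≤ x j ∧ x j ≤ Q j) →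
        sInf {y : ℝ | ∃ p : Fin N → ℝ, (∀ i, 0 ≤ p i) ∧ ∑ i, p i = 1 ∧
            y = ∑ i, p i * u ((∑ j, b j * x j) - ∑ j, A i j * x j)} ≤
        sInf {y : ℝ | ∃ p : Fin N → ℝ, (∀ i, 0 ≤ p i) ∧ ∑ i, p i = 1 ∧
            y = ∑ i, p i * u ((∑ j, b j * xstar j) - ∑ j, A i j * xstar j)}) := by
  set hne := Finset.univ_nonempty_iff.mpr (Fin.pos_iff_nonempty.mp hN)
  -- The worst case over the simplex is a vertex, i.e. the worst state, and `u` commutes with it.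
  have hworst : ∀ x : Fin J → ℝ,
      sInf {y : ℝ | ∃ p : Fin N → ℝ, (∀ i, 0 ≤ p i) ∧ ∑ i, p i = 1 ∧
          y = ∑ i, p i * u ((∑ j, b j * x j) - ∑ j, A i j * x j)} =
        u ((∑ j, b j * x j) - univ.sup' hne fun i => ∑ j, A i j * x j) := fun x => by
    have hanti : Antitone fun t => u ((∑ j, b j * x j) - t) :=
      hu.monotone.comp_antitone fun _ _ h => sub_le_sub_left h _
    rw [sInf_simplex_weightedSum_eq_inf', hanti.map_finset_sup']
    rfl
  simp only [hworst, hu.le_iff_le]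

/-- For the feasible set `X = {x : 0 ≤ x ≤ Q}`, a point `x*` maximizes
`x ↦ b·x − max_i (Ax)_i` over `X` if and only if it maximizes
`x ↦ min_{p ∈ Δ_N} ∑ i, p i * u (b·x − (Ax)_i)` over `X`, for any strictly increasing `u`. -/
theorem stmt_2 (N J : ℕ) (hN : 1 ≤ N) (hJ : 1 ≤ J)
    (A : Fin N → Fin J → ℝ) (b Q : Fin J → ℝ) (hQ : ∀ j, 0 ≤ Q j)
    (u : ℝ → ℝ) (hu : StrictMono u)
    (xstar : Fin J → ℝ) (hxstar : ∀ j, 0 ≤ xstar j ∧ xstar j ≤ Q j) :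
    (∀ x : Fin J → ℝ, (∀ j, 0 ≤ x j ∧ x j ≤ Q j) →
        (∑ j, b j * x j) -
          Finset.univ.sup' (Finset.univ_nonempty_iff.mpr (Fin.pos_iff_nonempty.mp hN))
            (fun i => ∑ j, A i j * x j) ≤
        (∑ j, b j * xstar j) -
          Finset.univ.sup' (Finset.univ_nonempty_iff.mpr (Fin.pos_iff_nonempty.mp hN))
            (fun i => ∑ j, A i j * xstar j))
    ↔
    (∀ x : Fin J → ℝ, (∀ j, 0 ≤ x j ∧ x j ≤ Q j) →
        sInf {y : ℝ | ∃ p : Fin N → ℝ, (∀ i, 0 ≤ p i) ∧ ∑ i, p i = 1 ∧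
            y = ∑ i, p i * u ((∑ j, b j * x j) - ∑ j, A i j * x j)} ≤
        sInf {y : ℝ | ∃ p : Fin N → ℝ, (∀ i, 0 ≤ p i) ∧ ∑ i, p i = 1 ∧
            y = ∑ i, p i * u ((∑ j, b j * xstar j) - ∑ j, A i j * xstar j)}) :=
  stmt_2_general N J hN A b Q u hu xstar
end

section
/- Let N, J ≥ 1, α > 0, A ∈ ℝ^{N×J}. For ξ ∈ ℝ^N and x ∈ ℝ^J define the market maker's worst-case objective g(ξ, x) = min_{p ∈ Δ_N} ( −∑_{i=1}^N p_i exp( −α ∑_{j=1}^J x_j ((Aᵀξ)_j − A_{ij}) ) ), where (Aᵀξ)_j = ∑_i A_{ij} ξ_i. Let F ⊆ ℝ^N × ℝ^J be any set of feasible pairs such that (ξ₀, 0) ∈ F for some ξ₀. If (ξ*, x*) ∈ F satisfies g(ξ*, x*) ≥ g(ξ, x) for all (ξ, x) ∈ F, then ∑_{j=1}^J x*_j ((Aᵀξ*)_j − A_{ij}) ≥ 0 for every i ∈ {1, …, N}; that is, the market maker loses no money in any state (the market is completely pari-mutuel). -/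
/-!
The worst case over the simplex of `-∑ pᵢ uᵢ` is attained at a vertex, so the objective is
`g(ξ, x) = minᵢ (-exp (-α cᵢ))`, where `cᵢ` is the market maker's payoff in state `i`. With zero
order fill every payoff vanishes and `g = -1`, so optimality of `(ξ*, x*)` forces
`-exp (-α cᵢ) ≥ -1` in every state, i.e. `cᵢ ≥ 0` since `α > 0`.
-/

open Finset

section Simplex

variable {ι : Type*} [Fintype ι]

theorem iInf_neg_le_neg_sum_mul {u p : ι → ℝ} (hp : ∀ i, 0 ≤ p i) (hp1 : ∑ i, p i = 1) :
    ⨅ i, -u i ≤ -∑ i, p i * u i :=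
  calc ⨅ i, -u i = ∑ i, p i * ⨅ k, -u k := by rw [← sum_mul, hp1, one_mul]
    _ ≤ ∑ i, p i * -u i :=
        sum_le_sum fun i _ => mul_le_mul_of_nonneg_left (ciInf_le (Finite.bddBelow_range _) i) (hp i)
    _ = -∑ i, p i * u i := by simp only [mul_neg, sum_neg_distrib]

theorem isLeast_neg_sum_mul_simplex [DecidableEq ι] [Nonempty ι] (u : ι → ℝ) :
    IsLeast {y : ℝ | ∃ p : ι → ℝ, (∀ i, 0 ≤ p i) ∧ ∑ i, p i = 1 ∧ y = -∑ i, p i * u i}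
      (⨅ i, -u i) := by
  refine ⟨?_, ?_⟩
  · obtain ⟨k, hk⟩ := exists_eq_ciInf_of_finite (f := fun i => -u i)
    refine ⟨fun i => if i = k then 1 else 0, fun i => by positivity, by simp, ?_⟩
    simp only [ite_mul, one_mul, zero_mul, sum_ite_eq', mem_univ, if_true]
    exact hk.symm
  · rintro y ⟨p, hp, hp1, rfl⟩
    exact iInf_neg_le_neg_sum_mul hp hp1

theorem sInf_neg_sum_mul_simplex [Nonempty ι] (u : ι → ℝ) :
    sInf {y : ℝ | ∃ p : ι → ℝ, (∀ i, 0 ≤ p i) ∧ ∑ i, p i = 1 ∧ y = -∑ i, p i * u i} =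
      ⨅ i, -u i := by
  classical
  exact (isLeast_neg_sum_mul_simplex u).csInf_eq

end Simplex

theorem stmt_4_general (N J : ℕ) (α : ℝ) (hα : 0 < α)
    (A : Fin N → Fin J → ℝ)
    (F : Set ((Fin N → ℝ) × (Fin J → ℝ)))
    (ξ₀ : Fin N → ℝ) (hF0 : (ξ₀, fun _ => (0 : ℝ)) ∈ F)
    (ξs : Fin N → ℝ) (xs : Fin J → ℝ)
    (hopt : ∀ ξ x, (ξ, x) ∈ F →
      sInf {y : ℝ | ∃ p : Fin N → ℝ, (∀ i, 0 ≤ p i) ∧ ∑ i, p i = 1 ∧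
          y = -∑ i, p i *
            Real.exp (-α * ∑ j, x j * ((∑ i', A i' j * ξ i') - A i j))} ≤
      sInf {y : ℝ | ∃ p : Fin N → ℝ, (∀ i, 0 ≤ p i) ∧ ∑ i, p i = 1 ∧
          y = -∑ i, p i *
            Real.exp (-α * ∑ j, xs j * ((∑ i', A i' j * ξs i') - A i j))}) :
    ∀ i, 0 ≤ ∑ j, xs j * ((∑ i', A i' j * ξs i') - A i j) := by
  intro i
  have : Nonempty (Fin N) := ⟨i⟩
  have hzero := hopt ξ₀ _ hF0
  simp only [zero_mul, sum_const_zero, mul_zero, Real.exp_zero] at hzero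
  rw [sInf_neg_sum_mul_simplex, sInf_neg_sum_mul_simplex, ciInf_const] at hzero
  have hexp := neg_le_neg_iff.mp (hzero.trans (ciInf_le (Finite.bddBelow_range _) i))
  rw [Real.exp_le_one_iff] at hexp
  nlinarith

/-- Corollary 1: If `(ξ*, x*)` maximizes the worst-case CARA objective
`g(ξ, x) = min_{p ∈ Δ_N} (−∑ i, p i * exp (−α ∑ j, x j * ((Aᵀξ)_j − A i j)))` over a
feasible set `F` containing a point with zero order fill, then the market maker's payoff
`∑ j, x*_j * ((Aᵀξ*)_j − A i j)` is nonnegative in every state `i`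
(the market is completely pari-mutuel). -/
theorem stmt_4 (N J : ℕ) (hN : 1 ≤ N) (hJ : 1 ≤ J) (α : ℝ) (hα : 0 < α)
    (A : Fin N → Fin J → ℝ)
    (F : Set ((Fin N → ℝ) × (Fin J → ℝ)))
    (ξ₀ : Fin N → ℝ) (hF0 : (ξ₀, fun _ => (0 : ℝ)) ∈ F)
    (ξs : Fin N → ℝ) (xs : Fin J → ℝ) (hmem : (ξs, xs) ∈ F)
    (hopt : ∀ ξ x, (ξ, x) ∈ F →
      sInf {y : ℝ | ∃ p : Fin N → ℝ, (∀ i, 0 ≤ p i) ∧ ∑ i, p i = 1 ∧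
          y = -∑ i, p i *
            Real.exp (-α * ∑ j, x j * ((∑ i', A i' j * ξ i') - A i j))} ≤
      sInf {y : ℝ | ∃ p : Fin N → ℝ, (∀ i, 0 ≤ p i) ∧ ∑ i, p i = 1 ∧
          y = -∑ i, p i *
            Real.exp (-α * ∑ j, xs j * ((∑ i', A i' j * ξs i') - A i j))}) :
    ∀ i, 0 ≤ ∑ j, xs j * ((∑ i', A i' j * ξs i') - A i j) :=
  stmt_4_general N J α hα A F ξ₀ hF0 ξs xs hopt
end

section
/- Let Q, β, c, x ∈ ℝ with Q ≥ 0 and 0 ≤ x ≤ Q, and suppose the limit order logic holds: x = 0 whenever c > β, and x = Q whenever c < β. Then the revenue c·x satisfies c·x = Q·c + β·(x − Q) − Q·max(0, c − β) = min( Q·c + β·(x − Q), β·x ). In particular, on the feasible set defined by the limit order logic, the bilinear revenue term equals a piecewise linear (concave, as a minimum of two affine) expression in (c, x). -/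
/-! Expanding, `Q * c + β * (x - Q) - c * x = (c - β) * (Q - x)` and
`Q * c + β * (x - Q) - β * x = Q * (c - β)`, so both identities reduce to statements about the
sign of `c - β`. The limit order logic makes these complementarity conditions: the fill sits at
`0` when the price exceeds the limit and at `Q` when it is below, so in every case one factor
vanishes. -/

section LimitOrder

variable {Q β c x : ℝ}

theorem sub_mul_sub_eq_mul_max_of_limitOrder (h1 : β < c → x = 0) (h2 : c < β → x = Q) :
    (c - β) * (Q - x) = Q * max 0 (c - β) := by
  rcases lt_trichotomy c β with h | rfl | h
  · rw [h2 h, max_eq_left (by linarith)]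
    ring
  · simp
  · rw [h1 h, max_eq_right (by linarith)]
    ring

theorem sub_mul_eq_min_of_limitOrder (hQ : 0 ≤ Q) (h1 : β < c → x = 0) (h2 : c < β → x = Q) :
    (c - β) * x = min (Q * (c - β)) 0 := by
  rcases lt_trichotomy c β with h | rfl | h
  · rw [h2 h, min_eq_left (mul_nonpos_of_nonneg_of_nonpos hQ (by linarith))]
    ring
  · simp
  · rw [h1 h, min_eq_right (mul_nonneg hQ (by linarith))]
    ring

end LimitOrder

theorem stmt_5_general (Q β c x : ℝ) (hQ : 0 ≤ Q)
    (h1 : β < c → x = 0) (h2 : c < β → x = Q) :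
    c * x = Q * c + β * (x - Q) - Q * max 0 (c - β) ∧
    c * x = min (Q * c + β * (x - Q)) (β * x) := by
  refine ⟨by linarith [sub_mul_sub_eq_mul_max_of_limitOrder h1 h2], ?_⟩
  calc c * x = β * x + (c - β) * x := by ring
    _ = β * x + min (Q * (c - β)) 0 := by rw [sub_mul_eq_min_of_limitOrder hQ h1 h2]
    _ = min (β * x + Q * (c - β)) (β * x + 0) := (min_add_add_left _ _ _).symm
    _ = min (Q * c + β * (x - Q)) (β * x) := by congr 1 <;> ring

/-- Linearization of the revenue term. If `0 ≤ x ≤ Q` and the limit order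
logic holds (`x = 0` when `c > β`, `x = Q` when `c < β`), then
`c·x = Q·c + β·(x − Q) − Q·max 0 (c − β) = min (Q·c + β·(x − Q)) (β·x)`. -/
theorem stmt_5 (Q β c x : ℝ) (hQ : 0 ≤ Q) (hx0 : 0 ≤ x) (hxQ : x ≤ Q)
    (h1 : β < c → x = 0) (h2 : c < β → x = Q) :
    c * x = Q * c + β * (x - Q) - Q * max 0 (c - β) ∧
    c * x = min (Q * c + β * (x - Q)) (β * x) :=
  stmt_5_general Q β c x hQ h1 h2
end

section
/- Let N ≥ 1 and θ ∈ ℝ^N with θ_i > 0 for all i. Then the function G : ℝ^N × (0, ∞) → ℝ defined by G(ω, μ) = μ · ln( ∑_{i=1}^N θ_i e^{ω_i/μ} ) is convex on the convex set ℝ^N × (0, ∞). -/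
/-!
`G` is the perspective `(ω, μ) ↦ μ f(ω / μ)` of the log-sum-exp function
`f(x) = log ∑ θᵢ exp xᵢ`. Log-sum-exp is convex by Hölder's inequality with exponents `1/a`,
`1/b`. The perspective of a convex function is convex: with `m = a μ + b ν`, the point
`(a ω + b ω') / m` is the convex combination of `ω / μ` and `ω' / ν` with weights `a μ / m` and
`b ν / m`, and multiplying Jensen's inequality for `f` by `m` gives the claim.
-/

open Real Finset

theorem Real.sum_rpow_mul_rpow_le {ι : Type*} (s : Finset ι) {f g : ι → ℝ}
    (hf : ∀ i ∈ s, 0 ≤ f i) (hg : ∀ i ∈ s, 0 ≤ g i) {a b : ℝ} (ha : 0 < a) (hb : 0 < b)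
    (hab : a + b = 1) :
    ∑ i ∈ s, f i ^ a * g i ^ b ≤ (∑ i ∈ s, f i) ^ a * (∑ i ∈ s, g i) ^ b := by
  have h := inner_le_Lp_mul_Lq_of_nonneg s (HolderConjugate.inv_inv ha hb hab)
    (fun i hi => rpow_nonneg (hf i hi) a) (fun i hi => rpow_nonneg (hg i hi) b)
  rwa [sum_congr rfl fun i hi => rpow_rpow_inv (hf i hi) ha.ne',
    sum_congr rfl fun i hi => rpow_rpow_inv (hg i hi) hb.ne', one_div, one_div, inv_inv,
    inv_inv] at h

theorem convexOn_log_sum_exp {ι : Type*} [Fintype ι] {θ : ι → ℝ} (hθ : ∀ i, 0 < θ i) :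
    ConvexOn ℝ Set.univ fun x : ι → ℝ => log (∑ i, θ i * exp (x i)) := by
  cases isEmpty_or_nonempty ι
  · simpa using convexOn_const (0 : ℝ) convex_univ
  refine convexOn_iff_forall_pos.2 ⟨convex_univ, fun x _ y _ a b ha hb hab => ?_⟩
  have hterm_pos : ∀ z : ι → ℝ, ∀ i, 0 < θ i * exp (z i) := fun z i => mul_pos (hθ i) (exp_pos _)
  have hsum_pos : ∀ z : ι → ℝ, 0 < ∑ i, θ i * exp (z i) := fun z =>
    sum_pos (fun i _ => hterm_pos z i) univ_nonempty
  have hterm : ∀ i, θ i * exp ((a • x + b • y) i) =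
      (θ i * exp (x i)) ^ a * (θ i * exp (y i)) ^ b := fun i => by
    rw [mul_rpow (hθ i).le (exp_pos _).le, mul_rpow (hθ i).le (exp_pos _).le, ← exp_mul,
      ← exp_mul]
    calc θ i * exp ((a • x + b • y) i) = θ i ^ (a + b) * exp (x i * a + y i * b) := by
          rw [hab, rpow_one]; simp only [Pi.add_apply, Pi.smul_apply, smul_eq_mul]; ring_nf
      _ = _ := by rw [rpow_add (hθ i), exp_add]; ring
  have hholder : ∑ i, θ i * exp ((a • x + b • y) i) ≤
      (∑ i, θ i * exp (x i)) ^ a * (∑ i, θ i * exp (y i)) ^ b := by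
    simpa only [hterm] using sum_rpow_mul_rpow_le univ (fun i _ => (hterm_pos x i).le)
      (fun i _ => (hterm_pos y i).le) ha hb hab
  calc log (∑ i, θ i * exp ((a • x + b • y) i))
      ≤ log ((∑ i, θ i * exp (x i)) ^ a * (∑ i, θ i * exp (y i)) ^ b) :=
        log_le_log (hsum_pos _) hholder
    _ = a • log (∑ i, θ i * exp (x i)) + b • log (∑ i, θ i * exp (y i)) := by
        rw [log_mul (rpow_pos_of_pos (hsum_pos x) a).ne' (rpow_pos_of_pos (hsum_pos y) b).ne',
          log_rpow (hsum_pos x), log_rpow (hsum_pos y), smul_eq_mul, smul_eq_mul]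

theorem ConvexOn.perspective {E : Type*} [AddCommGroup E] [Module ℝ E] {s : Set E} {f : E → ℝ}
    (hf : ConvexOn ℝ s f) :
    ConvexOn ℝ {p : E × ℝ | 0 < p.2 ∧ p.2⁻¹ • p.1 ∈ s} fun p => p.2 * f (p.2⁻¹ • p.1) := by
  have reweight : ∀ (x y : E) ⦃t u a b : ℝ⦄, 0 < t → 0 < u → 0 < a → 0 < b →
      ∃ v w : ℝ, 0 < v ∧ 0 < w ∧ v + w = 1 ∧ (a * t + b * u) * v = a * t ∧
        (a * t + b * u) * w = b * u ∧
        (a * t + b * u)⁻¹ • (a • x + b • y) = v • t⁻¹ • x + w • u⁻¹ • y := by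
    intro x y t u a b ht hu ha hb
    have hm : 0 < a * t + b * u := by positivity
    refine ⟨a * t / (a * t + b * u), b * u / (a * t + b * u), by positivity, by positivity,
      by field_simp, by field_simp, by field_simp, ?_⟩
    match_scalars <;> field_simp
  refine convexOn_iff_forall_pos.2 ⟨convex_iff_forall_pos.2 ?_, ?_⟩ <;>
    rintro ⟨x, t⟩ ⟨ht, hx⟩ ⟨y, u⟩ ⟨hu, hy⟩ a b ha hb - <;>
    simp only [Prod.smul_mk, Prod.mk_add_mk, smul_eq_mul] at ht hx hu hy ⊢ <;>
    obtain ⟨v, w, hv, hw, hvw, hmv, hmw, hcomb⟩ := reweight x y ht hu ha hb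
  · exact ⟨by positivity, hcomb ▸ hf.1 hx hy hv.le hw.le hvw⟩
  · rw [hcomb]
    calc (a * t + b * u) * f (v • t⁻¹ • x + w • u⁻¹ • y)
        ≤ (a * t + b * u) * (v * f (t⁻¹ • x) + w * f (u⁻¹ • y)) :=
          mul_le_mul_of_nonneg_left (hf.2 hx hy hv.le hw.le hvw) (by positivity)
      _ = a * (t * f (t⁻¹ • x)) + b * (u * f (u⁻¹ • y)) := by
          linear_combination f (t⁻¹ • x) * hmv + f (u⁻¹ • y) * hmw

theorem stmt_8_general (N : ℕ) (θ : Fin N → ℝ) (hθ : ∀ i, 0 < θ i) :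
    ConvexOn ℝ ((Set.univ : Set (Fin N → ℝ)) ×ˢ Set.Ioi (0 : ℝ))
      (fun p : (Fin N → ℝ) × ℝ => p.2 * Real.log (∑ i, θ i * Real.exp (p.1 i / p.2))) := by
  have hdom : (Set.univ ×ˢ Set.Ioi 0 : Set ((Fin N → ℝ) × ℝ)) =
      {p | 0 < p.2 ∧ p.2⁻¹ • p.1 ∈ Set.univ} := by
    ext; simp
  rw [hdom]
  convert (convexOn_log_sum_exp hθ).perspective using 5 with p
  simp only [Pi.smul_apply, smul_eq_mul, inv_mul_eq_div]

/-- Lemma 5: For `θ_i > 0`, the function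
`G(ω, μ) = μ · ln (∑ i, θ i * e^{ω i / μ})` is convex on `ℝ^N × (0, ∞)`. -/
theorem stmt_8 (N : ℕ) (hN : 1 ≤ N) (θ : Fin N → ℝ) (hθ : ∀ i, 0 < θ i) :
    ConvexOn ℝ ((Set.univ : Set (Fin N → ℝ)) ×ˢ Set.Ioi (0 : ℝ))
      (fun p : (Fin N → ℝ) × ℝ => p.2 * Real.log (∑ i, θ i * Real.exp (p.1 i / p.2))) :=
  stmt_8_general N θ hθ
end

section
/- Let N ≥ 1, Ω > 0, q ∈ ℝ^N with q_i > 0 for all i and ∑_{i=1}^N q_i = 1, and d ∈ ℝ^N. Let Ψ = { p ∈ Δ_N : ∑_{i=1}^N p_i ln(p_i/q_i) ≤ Ω } (with the convention 0·ln 0 = 0). Then strong duality holds for the Kullback–Leibler-constrained linear minimization: min_{p ∈ Ψ} ∑_{i=1}^N d_i p_i = sup_{μ > 0} ( −μΩ − μ · ln( ∑_{i=1}^N q_i e^{−d_i/μ} ) ). -/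
/-!
Weak duality is Gibbs' inequality: for the Gibbs tilt `r ∝ q e^{-d/μ}` of the prior,
`KL(p‖q) = KL(p‖r) - ⟨d, p⟩/μ - log Z(1/μ)`, so `KL(p‖r) ≥ 0` turns `KL(p‖q) ≤ Ω` into
`⟨d, p⟩ ≥ -μΩ - μ log Z(1/μ)`, with equality when `p = r` and `KL(r‖q) = Ω`.

As the inverse temperature runs from `0` to `∞`, the tilt moves continuously from `q` (divergence
`0`) to `q` conditioned on the minimisers of `d` (divergence `-log Q`, `Q` their prior mass).
If `Ω < -log Q` the intermediate value theorem yields a tilt of divergence exactly `Ω`, where the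
dual supremum is attained. Otherwise the conditioned prior is feasible and attains `min d`, and the
dual values `-μΩ - μ log Z(1/μ) ≥ min d - μΩ` approach it as `μ → 0`.
-/

open Real Finset Filter Topology InformationTheory

namespace KLDuality

variable {ι : Type*} [Fintype ι]

noncomputable section

/-- `Real.log 0 = 0` provides the convention `0 * log (0 / q) = 0`. -/
def relEntropy (p q : ι → ℝ) : ℝ := ∑ i, p i * log (p i / q i)

def partitionFn (q d : ι → ℝ) (β : ℝ) : ℝ := ∑ i, q i * exp (-(β * d i))

def gibbs (q d : ι → ℝ) (β : ℝ) (i : ι) : ℝ := q i * exp (-(β * d i)) / partitionFn q d β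

def dualFn (q d : ι → ℝ) (Ω μ : ℝ) : ℝ := -μ * Ω - μ * log (∑ i, q i * exp (-(d i) / μ))

def dualValues (q d : ι → ℝ) (Ω : ℝ) : Set ℝ := {y | ∃ μ : ℝ, 0 < μ ∧ y = dualFn q d Ω μ}

def klBall (q : ι → ℝ) (Ω : ℝ) : Set (ι → ℝ) := {p ∈ stdSimplex ℝ ι | relEntropy p q ≤ Ω}

def levelMass (q d : ι → ℝ) (m : ℝ) : ℝ := ∑ j with d j = m, q j

def condLevel (q d : ι → ℝ) (m : ℝ) (i : ι) : ℝ := if d i = m then q i / levelMass q d m else 0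

end

theorem relEntropy_self (p : ι → ℝ) : relEntropy p p = 0 :=
  sum_eq_zero fun i _ => by rcases eq_or_ne (p i) 0 with h | h <;> simp [h]

theorem relEntropy_nonneg {p r : ι → ℝ} (hp : p ∈ stdSimplex ℝ ι) (hr : ∀ i, 0 < r i)
    (hr1 : ∑ i, r i = 1) : 0 ≤ relEntropy p r := by
  have hterm : ∀ i, p i * log (p i / r i) = r i * klFun (p i / r i) + (p i - r i) := by
    intro i
    have := (hr i).ne'
    rw [klFun_apply]
    field_simp
    ring
  calc 0 ≤ ∑ i, r i * klFun (p i / r i) :=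
        sum_nonneg fun i _ => mul_nonneg (hr i).le (klFun_nonneg (div_nonneg (hp.1 i) (hr i).le))
    _ = relEntropy p r := by
        simp only [relEntropy, hterm, sum_add_distrib, sum_sub_distrib, hp.2, hr1, sub_self,
          add_zero]

theorem continuous_relEntropy (q : ι → ℝ) : Continuous fun p : ι → ℝ => relEntropy p q := by
  refine continuous_finsetSum _ fun i _ => ?_
  rcases eq_or_ne (q i) 0 with h | h
  · simp only [h, div_zero, log_zero, mul_zero]
    exact continuous_const
  · have hscale : ∀ x : ℝ, x * log (x / q i) = q i * ((x / q i) * log (x / q i)) := fun x => by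
      field_simp
    simp only [hscale]
    exact continuous_const.mul (continuous_mul_log.comp ((continuous_apply i).div_const _))

theorem partitionFn_pos [Nonempty ι] {q : ι → ℝ} (hq : ∀ i, 0 < q i) (d : ι → ℝ) (β : ℝ) :
    0 < partitionFn q d β :=
  sum_pos (fun i _ => mul_pos (hq i) (exp_pos _)) univ_nonempty

theorem partitionFn_le {q d : ι → ℝ} (hq : ∀ i, 0 ≤ q i) (hq1 : ∑ i, q i = 1) {m β : ℝ}
    (hm : ∀ i, m ≤ d i) (hβ : 0 ≤ β) : partitionFn q d β ≤ exp (-(β * m)) :=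
  calc partitionFn q d β ≤ ∑ i, q i * exp (-(β * m)) :=
        sum_le_sum fun i _ => mul_le_mul_of_nonneg_left
          (exp_le_exp.2 (neg_le_neg (mul_le_mul_of_nonneg_left (hm i) hβ))) (hq i)
    _ = exp (-(β * m)) := by rw [← sum_mul, hq1, one_mul]

theorem partitionFn_sub_const (q d : ι → ℝ) (c β : ℝ) :
    partitionFn q (fun i => d i - c) β = exp (β * c) * partitionFn q d β := by
  rw [partitionFn, partitionFn, mul_sum]
  refine sum_congr rfl fun i _ => ?_
  rw [show -(β * (d i - c)) = β * c + -(β * d i) by ring, exp_add]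
  ring

theorem gibbs_sub_const (q d : ι → ℝ) (c β : ℝ) : gibbs q (fun i => d i - c) β = gibbs q d β := by
  ext i
  rw [gibbs, gibbs, partitionFn_sub_const, show -(β * (d i - c)) = β * c + -(β * d i) by ring,
    exp_add, mul_left_comm, mul_div_mul_left _ _ (exp_pos _).ne']

theorem gibbs_zero {q : ι → ℝ} (hq1 : ∑ i, q i = 1) (d : ι → ℝ) : gibbs q d 0 = q := by
  ext i
  simp [gibbs, partitionFn, hq1]

theorem gibbs_pos [Nonempty ι] {q : ι → ℝ} (hq : ∀ i, 0 < q i) (d : ι → ℝ) (β : ℝ) (i : ι) :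
    0 < gibbs q d β i :=
  div_pos (mul_pos (hq i) (exp_pos _)) (partitionFn_pos hq d β)

theorem sum_gibbs [Nonempty ι] {q : ι → ℝ} (hq : ∀ i, 0 < q i) (d : ι → ℝ) (β : ℝ) :
    ∑ i, gibbs q d β i = 1 := by
  simp only [gibbs, ← sum_div]
  exact div_self (partitionFn_pos hq d β).ne'

theorem gibbs_mem_stdSimplex [Nonempty ι] {q : ι → ℝ} (hq : ∀ i, 0 < q i) (d : ι → ℝ) (β : ℝ) :
    gibbs q d β ∈ stdSimplex ℝ ι :=
  ⟨fun i => (gibbs_pos hq d β i).le, sum_gibbs hq d β⟩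

theorem continuous_gibbs [Nonempty ι] {q : ι → ℝ} (hq : ∀ i, 0 < q i) (d : ι → ℝ) :
    Continuous (gibbs q d) := by
  have hZ : Continuous (partitionFn q d) := by unfold partitionFn; fun_prop
  exact continuous_pi fun i =>
    (by fun_prop : Continuous fun β => q i * exp (-(β * d i))).div hZ
      fun β => (partitionFn_pos hq d β).ne'

theorem log_gibbs_div [Nonempty ι] {q : ι → ℝ} (hq : ∀ i, 0 < q i) (d : ι → ℝ) (β : ℝ) (i : ι) :
    log (gibbs q d β i / q i) = -(β * d i) - log (partitionFn q d β) := by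
  have hratio : gibbs q d β i / q i = exp (-(β * d i)) / partitionFn q d β := by
    rw [gibbs]
    field_simp [(hq i).ne']
  rw [hratio, log_div (exp_pos _).ne' (partitionFn_pos hq d β).ne', log_exp]

theorem relEntropy_eq_relEntropy_gibbs [Nonempty ι] {q : ι → ℝ} (hq : ∀ i, 0 < q i)
    {p : ι → ℝ} (hp1 : ∑ i, p i = 1) (d : ι → ℝ) (β : ℝ) :
    relEntropy p q = relEntropy p (gibbs q d β) - β * ∑ i, d i * p i
      - log (partitionFn q d β) := by
  have hg := gibbs_pos hq d β
  have hsplit : ∀ i, p i * log (p i / q i) = p i * log (p i / gibbs q d β i)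
      + (-β * (d i * p i) - log (partitionFn q d β) * p i) := by
    intro i
    rw [show -β * (d i * p i) - log (partitionFn q d β) * p i
        = p i * log (gibbs q d β i / q i) by rw [log_gibbs_div hq]; ring]
    rcases eq_or_ne (p i) 0 with h | h
    · simp [h]
    · rw [← mul_add, ← log_mul (div_ne_zero h (hg i).ne') (div_ne_zero (hg i).ne' (hq i).ne'),
        div_mul_div_cancel₀ (hg i).ne']
  simp only [relEntropy, hsplit, sum_add_distrib, sum_sub_distrib, ← mul_sum, hp1]
  ring

theorem relEntropy_gibbs [Nonempty ι] {q : ι → ℝ} (hq : ∀ i, 0 < q i) (d : ι → ℝ) (β : ℝ) :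
    relEntropy (gibbs q d β) q = -(β * ∑ i, d i * gibbs q d β i) - log (partitionFn q d β) := by
  rw [relEntropy_eq_relEntropy_gibbs hq (sum_gibbs hq d β) d β, relEntropy_self]
  ring

theorem dualFn_eq (q d : ι → ℝ) (Ω μ : ℝ) :
    dualFn q d Ω μ = -μ * Ω - μ * log (partitionFn q d μ⁻¹) := by
  simp only [dualFn, partitionFn, div_eq_inv_mul, mul_neg]

theorem dualFn_le [Nonempty ι] {q : ι → ℝ} (hq : ∀ i, 0 < q i) (d : ι → ℝ) {Ω μ : ℝ}
    (hμ : 0 < μ) {p : ι → ℝ} (hp : p ∈ klBall q Ω) : dualFn q d Ω μ ≤ ∑ i, d i * p i := by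
  have hgibbs := relEntropy_nonneg hp.1 (gibbs_pos hq d μ⁻¹) (sum_gibbs hq d μ⁻¹)
  have hsplit := relEntropy_eq_relEntropy_gibbs hq hp.1.2 d μ⁻¹
  have hΩ : -(μ⁻¹ * ∑ i, d i * p i) - log (partitionFn q d μ⁻¹) ≤ Ω := by linarith [hp.2]
  have hμΩ := mul_le_mul_of_nonneg_left hΩ hμ.le
  rw [mul_sub, mul_neg, ← mul_assoc, mul_inv_cancel₀ hμ.ne', one_mul] at hμΩ
  rw [dualFn_eq]
  linarith

theorem mem_upperBounds_dualValues [Nonempty ι] {q : ι → ℝ} (hq : ∀ i, 0 < q i) (d : ι → ℝ)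
    {Ω : ℝ} {p : ι → ℝ} (hp : p ∈ klBall q Ω) :
    ∑ i, d i * p i ∈ upperBounds (dualValues q d Ω) := by
  rintro _ ⟨μ, hμ, rfl⟩
  exact dualFn_le hq d hμ hp

theorem isGreatest_dualValues_of_relEntropy_gibbs [Nonempty ι] {q : ι → ℝ} (hq : ∀ i, 0 < q i)
    (d : ι → ℝ) {β : ℝ} (hβ : 0 < β) :
    IsGreatest (dualValues q d (relEntropy (gibbs q d β) q)) (∑ i, d i * gibbs q d β i) := by
  refine ⟨⟨β⁻¹, inv_pos.2 hβ, ?_⟩,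
    mem_upperBounds_dualValues hq d ⟨gibbs_mem_stdSimplex hq d β, le_rfl⟩⟩
  rw [dualFn_eq, inv_inv, relEntropy_gibbs hq]
  field_simp
  ring

theorem sub_mul_le_dualFn [Nonempty ι] {q d : ι → ℝ} (hq : ∀ i, 0 < q i) (hq1 : ∑ i, q i = 1)
    {m : ℝ} (hm : ∀ i, m ≤ d i) (Ω : ℝ) {μ : ℝ} (hμ : 0 < μ) : m - μ * Ω ≤ dualFn q d Ω μ := by
  have hlog : log (partitionFn q d μ⁻¹) ≤ -(μ⁻¹ * m) := by
    rw [log_le_iff_le_exp (partitionFn_pos hq d _)]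
    exact partitionFn_le (fun i => (hq i).le) hq1 hm (inv_nonneg.2 hμ.le)
  have hμlog := mul_le_mul_of_nonneg_left hlog hμ.le
  rw [mul_neg, ← mul_assoc, mul_inv_cancel₀ hμ.ne', one_mul] at hμlog
  rw [dualFn_eq]
  linarith

section Minimisers

variable {q d : ι → ℝ} {m : ℝ}

theorem levelMass_pos (hq : ∀ i, 0 < q i) (hm : m ∈ Set.range d) : 0 < levelMass q d m := by
  obtain ⟨i, hi⟩ := hm
  exact sum_pos (fun j _ => hq j) ⟨i, by simp [hi]⟩

theorem sum_condLevel (hq : ∀ i, 0 < q i) (hm : m ∈ Set.range d) : ∑ i, condLevel q d m i = 1 := by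
  simp only [condLevel]
  rw [← sum_filter, ← sum_div]
  exact div_self (levelMass_pos hq hm).ne'

theorem condLevel_mem_stdSimplex (hq : ∀ i, 0 < q i) (hm : m ∈ Set.range d) :
    condLevel q d m ∈ stdSimplex ℝ ι := by
  refine ⟨fun i => ?_, sum_condLevel hq hm⟩
  unfold condLevel
  split_ifs
  exacts [div_nonneg (hq i).le (levelMass_pos hq hm).le, le_rfl]

theorem relEntropy_condLevel (hq : ∀ i, 0 < q i) (hm : m ∈ Set.range d) :
    relEntropy (condLevel q d m) q = -log (levelMass q d m) := by
  have hterm : ∀ i, condLevel q d m i * log (condLevel q d m i / q i)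
      = condLevel q d m i * -log (levelMass q d m) := by
    intro i
    unfold condLevel
    split_ifs
    · rw [div_div_cancel_left' (hq i).ne', log_inv]
    · simp
  rw [relEntropy, sum_congr rfl fun i _ => hterm i, ← sum_mul, sum_condLevel hq hm, one_mul]

theorem sum_mul_condLevel (hq : ∀ i, 0 < q i) (hm : m ∈ Set.range d) :
    ∑ i, d i * condLevel q d m i = m := by
  have hterm : ∀ i, d i * condLevel q d m i = m * condLevel q d m i := by
    intro i
    unfold condLevel
    split_ifs with h
    · rw [h]
    · simp
  rw [sum_congr rfl fun i _ => hterm i, ← mul_sum, sum_condLevel hq hm, mul_one]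

theorem tendsto_mul_exp_neg_mul_sub (a : ℝ) {x : ℝ} (hx : m ≤ x) :
    Tendsto (fun β => a * exp (-(β * (x - m)))) atTop (𝓝 (if x = m then a else 0)) := by
  split_ifs with h
  · simp [h]
  · have hpos : 0 < x - m := sub_pos.2 (lt_of_le_of_ne hx (Ne.symm h))
    simpa using (tendsto_exp_neg_atTop_nhds_zero.comp
      (tendsto_id.atTop_mul_const hpos)).const_mul a

theorem tendsto_gibbs_atTop (hq : ∀ i, 0 < q i) (hm : IsLeast (Set.range d) m) :
    Tendsto (gibbs q d) atTop (𝓝 (condLevel q d m)) := by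
  have hd : ∀ i, m ≤ d i := fun i => hm.2 ⟨i, rfl⟩
  have hZ : Tendsto (partitionFn q fun i => d i - m) atTop (𝓝 (levelMass q d m)) := by
    rw [levelMass, sum_filter]
    exact tendsto_finsetSum _ fun i _ => tendsto_mul_exp_neg_mul_sub (q i) (hd i)
  rw [← funext fun β => gibbs_sub_const q d m β]
  refine tendsto_pi_nhds.2 fun i => ?_
  have hlimit : condLevel q d m i = (if d i = m then q i else 0) / levelMass q d m := by
    unfold condLevel
    split_ifs <;> simp
  rw [hlimit]
  exact (tendsto_mul_exp_neg_mul_sub (q i) (hd i)).div hZ (levelMass_pos hq hm.1).ne'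

theorem exists_relEntropy_gibbs_eq [Nonempty ι] (hq : ∀ i, 0 < q i) (hq1 : ∑ i, q i = 1)
    (hm : IsLeast (Set.range d) m) {Ω : ℝ} (hΩ : 0 < Ω) (hΩQ : Ω < -log (levelMass q d m)) :
    ∃ β > 0, relEntropy (gibbs q d β) q = Ω := by
  set f : ℝ → ℝ := fun β => relEntropy (gibbs q d β) q
  have hf : Continuous f := (continuous_relEntropy q).comp (continuous_gibbs hq d)
  have hf0 : f 0 = 0 := by simp only [f, gibbs_zero hq1, relEntropy_self]
  have hlim : Tendsto f atTop (𝓝 (-log (levelMass q d m))) := by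
    rw [← relEntropy_condLevel hq hm.1]
    exact ((continuous_relEntropy q).tendsto _).comp (tendsto_gibbs_atTop hq hm)
  obtain ⟨T, hΩT, hT⟩ :=
    ((hlim.eventually (lt_mem_nhds hΩQ)).and (eventually_ge_atTop 0)).exists
  obtain ⟨β, hβ, hfβ⟩ :=
    intermediate_value_Icc hT hf.continuousOn ⟨by rw [hf0]; exact hΩ.le, hΩT.le⟩
  refine ⟨β, lt_of_le_of_ne hβ.1 ?_, hfβ⟩
  rintro rfl
  exact hΩ.ne' (hfβ ▸ hf0)

theorem isLUB_dualValues_of_le [Nonempty ι] (hq : ∀ i, 0 < q i) (hq1 : ∑ i, q i = 1)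
    (hm : IsLeast (Set.range d) m) {Ω : ℝ} (hΩ : 0 < Ω) (hQΩ : -log (levelMass q d m) ≤ Ω) :
    IsLUB (dualValues q d Ω) m := by
  have hfeas : condLevel q d m ∈ klBall q Ω :=
    ⟨condLevel_mem_stdSimplex hq hm.1, (relEntropy_condLevel hq hm.1).trans_le hQΩ⟩
  refine ⟨sum_mul_condLevel hq hm.1 ▸ mem_upperBounds_dualValues hq d hfeas, fun b hb => ?_⟩
  refine le_of_forall_sub_le fun ε hε => ?_
  have hμ : 0 < ε / Ω := div_pos hε hΩ
  calc m - ε = m - ε / Ω * Ω := by rw [div_mul_cancel₀ _ hΩ.ne']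
    _ ≤ dualFn q d Ω (ε / Ω) := sub_mul_le_dualFn hq hq1 (fun i => hm.2 ⟨i, rfl⟩) Ω hμ
    _ ≤ b := hb ⟨_, hμ, rfl⟩

end Minimisers

theorem exists_mem_klBall_isLUB_dualValues [Nonempty ι] {q : ι → ℝ} (hq : ∀ i, 0 < q i)
    (hq1 : ∑ i, q i = 1) {Ω : ℝ} (hΩ : 0 < Ω) (d : ι → ℝ) :
    ∃ p ∈ klBall q Ω, IsLUB (dualValues q d Ω) (∑ i, d i * p i) := by
  obtain ⟨i₀, hi₀⟩ := Finite.exists_min d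
  have hm : IsLeast (Set.range d) (d i₀) := ⟨⟨i₀, rfl⟩, by rintro _ ⟨i, rfl⟩; exact hi₀ i⟩
  by_cases hQΩ : -log (levelMass q d (d i₀)) ≤ Ω
  · refine ⟨condLevel q d (d i₀), ⟨condLevel_mem_stdSimplex hq hm.1, ?_⟩, ?_⟩
    · rwa [relEntropy_condLevel hq hm.1]
    · rw [sum_mul_condLevel hq hm.1]
      exact isLUB_dualValues_of_le hq hq1 hm hΩ hQΩ
  · obtain ⟨β, hβ, rfl⟩ := exists_relEntropy_gibbs_eq hq hq1 hm hΩ (not_le.1 hQΩ)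
    exact ⟨gibbs q d β, ⟨gibbs_mem_stdSimplex hq d β, le_rfl⟩,
      (isGreatest_dualValues_of_relEntropy_gibbs hq d hβ).isLUB⟩

end KLDuality

open KLDuality

theorem stmt_14_general (N : ℕ) (Ω : ℝ) (hΩ : 0 < Ω)
    (q : Fin N → ℝ) (hq : ∀ i, 0 < q i) (hq1 : ∑ i, q i = 1) (d : Fin N → ℝ) :
    ∃ pstar : Fin N → ℝ,
      ((∀ i, 0 ≤ pstar i) ∧ (∑ i, pstar i) = 1 ∧
        (∑ i, pstar i * Real.log (pstar i / q i)) ≤ Ω) ∧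
      (∀ p : Fin N → ℝ, (∀ i, 0 ≤ p i) → (∑ i, p i) = 1 →
        (∑ i, p i * Real.log (p i / q i)) ≤ Ω →
        (∑ i, d i * pstar i) ≤ ∑ i, d i * p i) ∧
      (∑ i, d i * pstar i) =
        sSup {y : ℝ | ∃ μ : ℝ, 0 < μ ∧
          y = -μ * Ω - μ * Real.log (∑ i, q i * Real.exp (-(d i) / μ))} := by
  have : Nonempty (Fin N) :=
    univ_nonempty_iff.1 (nonempty_of_sum_ne_zero (hq1.trans_ne one_ne_zero))
  obtain ⟨pstar, hpstar, hlub⟩ := exists_mem_klBall_isLUB_dualValues hq hq1 hΩ d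
  refine ⟨pstar, ⟨hpstar.1.1, hpstar.1.2, hpstar.2⟩, ?_, (hlub.csSup_eq ⟨_, 1, one_pos, rfl⟩).symm⟩
  intro p hp hp1 hpΩ
  exact hlub.2 (mem_upperBounds_dualValues hq d ⟨⟨hp, hp1⟩, hpΩ⟩)

/-- strong duality for the KL-constrained linear minimization: With
`Ψ = {p ∈ Δ_N : ∑ i, p i ln (p i / q i) ≤ Ω}` (for `Ω > 0` and strictly positive prior `q`),
the minimum of `∑ i, d i * p i` over `Ψ` is attained and equals
`sup_{μ > 0} (−μΩ − μ ln (∑ i, q i e^{−d i/μ}))`. -/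
theorem stmt_14 (N : ℕ) (hN : 1 ≤ N) (Ω : ℝ) (hΩ : 0 < Ω)
    (q : Fin N → ℝ) (hq : ∀ i, 0 < q i) (hq1 : ∑ i, q i = 1) (d : Fin N → ℝ) :
    ∃ pstar : Fin N → ℝ,
      ((∀ i, 0 ≤ pstar i) ∧ (∑ i, pstar i) = 1 ∧
        (∑ i, pstar i * Real.log (pstar i / q i)) ≤ Ω) ∧
      (∀ p : Fin N → ℝ, (∀ i, 0 ≤ p i) → (∑ i, p i) = 1 →
        (∑ i, p i * Real.log (p i / q i)) ≤ Ω →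
        (∑ i, d i * pstar i) ≤ ∑ i, d i * p i) ∧
      (∑ i, d i * pstar i) =
        sSup {y : ℝ | ∃ μ : ℝ, 0 < μ ∧
          y = -μ * Ω - μ * Real.log (∑ i, q i * Real.exp (-(d i) / μ))} :=
  stmt_14_general N Ω hΩ q hq hq1 d
end
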